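/- arXiv:1611.03700 — 6 statements merged into one kernel-verified Lean document; each statement's English description precedes it below -/
import Mathlib

section
/- Let W ∈ ℝ^{n×n} be symmetric positive definite and T ∈ ℝ^{n×n} be symmetric positive semidefinite. Let λ ∈ ℂ and u = (x; y) ∈ ℂ^{2n} with u ≠ 0 satisfy 𝒜u = λ𝒢_α u, where 𝒜 = [[W, −T], [T, W]] and 𝒢_α = [[W, 0], [αI, W]] for some α ∈ ℝ. If λ ≠ 1, then x = (1 − λ)⁻¹ W⁻¹ T y (as vectors in ℂⁿ, with W⁻¹ the inverse of W regarded as a complex matrix). -/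
open Matrix

/-- If `(λ, (x; y))` is an eigenpair of `𝒢_α⁻¹𝒜` with `λ ≠ 1`, then
`x = (1 - λ)⁻¹ W⁻¹ T y`. -/
theorem blt_eigen_x_formula {n : ℕ} (W T : Matrix (Fin n) (Fin n) ℝ)
    (hW : W.PosDef) (hT : T.PosSemidef) (α : ℝ) (lam : ℂ) (x y : Fin n → ℂ)
    (hu : Sum.elim x y ≠ 0)
    (heig : Matrix.fromBlocks (W.map Complex.ofReal) (-(T.map Complex.ofReal))
        (T.map Complex.ofReal) (W.map Complex.ofReal) *ᵥ Sum.elim x y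
      = lam • (Matrix.fromBlocks (W.map Complex.ofReal) 0 ((α : ℂ) • 1)
        (W.map Complex.ofReal) *ᵥ Sum.elim x y))
    (hlam : lam ≠ 1) :
    x = (1 - lam)⁻¹ • ((W.map Complex.ofReal)⁻¹ *ᵥ (T.map Complex.ofReal *ᵥ y)) := by
  set Wc := W.map Complex.ofReal with hWc
  set Tc := T.map Complex.ofReal with hTc
  have hdet : Wc.det ≠ 0 := by
    have : Wc.det = (W.det : ℂ) := by
      rw [hWc]
      exact (RingHom.map_det (algebraMap ℝ ℂ) W).symm
    rw [this]
    exact_mod_cast Complex.ofReal_ne_zero.mpr (ne_of_gt hW.det_pos)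
  have h1 : Wc *ᵥ x + (-Tc) *ᵥ y = lam • (Wc *ᵥ x + (0 : Matrix (Fin n) (Fin n) ℂ) *ᵥ y) := by
    have := congrArg (fun v => v ∘ Sum.inl) heig
    simpa [Matrix.fromBlocks_mulVec, funext_iff] using funext_iff.mpr fun i =>
      congrFun heig (Sum.inl i)
  have h2 : (1 - lam) • (Wc *ᵥ x) = Tc *ᵥ y := by
    have := h1
    simp only [Matrix.zero_mulVec, add_zero, Matrix.neg_mulVec] at this
    have := sub_eq_zero.mpr this
    funext i
    have hi := congrFun this i
    simp only [Pi.add_apply, Pi.sub_apply, Pi.neg_apply, Pi.smul_apply, Pi.zero_apply,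
      smul_eq_mul, sub_smul, one_smul] at hi ⊢
    linear_combination hi
  have h3 : Wc *ᵥ ((1 - lam) • x) = Tc *ᵥ y := by
    rw [Matrix.mulVec_smul]; exact h2
  have h4 : (1 - lam) • x = Wc⁻¹ *ᵥ (Tc *ᵥ y) := by
    rw [← h3, Matrix.mulVec_mulVec, Matrix.nonsing_inv_mul _ (isUnit_iff_ne_zero.mpr hdet), Matrix.one_mulVec]
  have hne : (1 - lam) ≠ 0 := sub_ne_zero.mpr (Ne.symm hlam)
  rw [← h4, smul_smul, inv_mul_cancel₀ hne, one_smul]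
end

section
/- Let W ∈ ℝ^{n×n} be symmetric positive definite and T ∈ ℝ^{n×n} be symmetric positive semidefinite. Let λ ∈ ℂ and u = (x; y) ∈ ℂ^{2n} with u ≠ 0 satisfy 𝒜u = λ𝒢_α u, where 𝒜 = [[W, −T], [T, W]] and 𝒢_α = [[W, 0], [αI, W]] for some α ∈ ℝ. If λ ≠ 1, then (1 − λ)² W y = αλ W⁻¹ T y − T W⁻¹ T y (as vectors in ℂⁿ). -/
open Matrix

/-- If `(λ, (x; y))` is an eigenpair of `𝒢_α⁻¹𝒜` with `λ ≠ 1`, then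
`(1 - λ)² W y = α λ W⁻¹ T y - T W⁻¹ T y`. -/
theorem blt_eigen_y_equation {n : ℕ} (W T : Matrix (Fin n) (Fin n) ℝ)
    (hW : W.PosDef) (hT : T.PosSemidef) (α : ℝ) (lam : ℂ) (x y : Fin n → ℂ)
    (hu : Sum.elim x y ≠ 0)
    (heig : Matrix.fromBlocks (W.map Complex.ofReal) (-(T.map Complex.ofReal))
        (T.map Complex.ofReal) (W.map Complex.ofReal) *ᵥ Sum.elim x y
      = lam • (Matrix.fromBlocks (W.map Complex.ofReal) 0 ((α : ℂ) • 1)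
        (W.map Complex.ofReal) *ᵥ Sum.elim x y))
    (hlam : lam ≠ 1) :
    (1 - lam) ^ 2 • (W.map Complex.ofReal *ᵥ y)
      = ((α : ℂ) * lam) • ((W.map Complex.ofReal)⁻¹ *ᵥ (T.map Complex.ofReal *ᵥ y))
        - (T.map Complex.ofReal * (W.map Complex.ofReal)⁻¹ * T.map Complex.ofReal) *ᵥ y := by
  set Wc := W.map Complex.ofReal with hWcdef
  set Tc := T.map Complex.ofReal with hTcdef
  -- Wc is invertible
  have hdet : IsUnit Wc.det := by
    have h : Wc.det = (W.det : ℂ) := by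
      rw [hWcdef]
      exact (RingHom.map_det Complex.ofRealHom W).symm
    rw [h, isUnit_iff_ne_zero]
    exact_mod_cast ne_of_gt hW.det_pos
  have hinv : Wc⁻¹ * Wc = 1 := Matrix.nonsing_inv_mul _ hdet
  have hx : ∀ z : Fin n → ℂ, Wc⁻¹ *ᵥ (Wc *ᵥ z) = z := fun z => by
    rw [Matrix.mulVec_mulVec, hinv, Matrix.one_mulVec]
  rw [Matrix.fromBlocks_mulVec, Matrix.fromBlocks_mulVec] at heig
  have eq1 : Wc *ᵥ x + (-Tc) *ᵥ y = lam • (Wc *ᵥ x + 0 *ᵥ y) :=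
    funext fun i => congrFun heig (Sum.inl i)
  have eq2 : Tc *ᵥ x + Wc *ᵥ y = lam • (((α : ℂ) • 1) *ᵥ x + Wc *ᵥ y) :=
    funext fun i => congrFun heig (Sum.inr i)
  rw [Matrix.neg_mulVec, Matrix.zero_mulVec, add_zero] at eq1
  rw [Matrix.smul_mulVec, Matrix.one_mulVec] at eq2
  have hb : Tc *ᵥ y = (1 - lam) • (Wc *ᵥ x) := by
    have : Wc *ᵥ x - Tc *ᵥ y = lam • (Wc *ᵥ x) := by
      rw [sub_eq_add_neg]; exact eq1
    rw [sub_smul, one_smul]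
    linear_combination (norm := module) -this
  have hv : Wc⁻¹ *ᵥ (Tc *ᵥ y) = (1 - lam) • x := by
    rw [hb, Matrix.mulVec_smul, hx]
  have hgoal2 : (Tc * Wc⁻¹ * Tc) *ᵥ y = (1 - lam) • (Tc *ᵥ x) := by
    rw [Matrix.mul_assoc, ← Matrix.mulVec_mulVec, ← Matrix.mulVec_mulVec, hv,
      Matrix.mulVec_smul]
  rw [hv, hgoal2]
  have eq2' : Tc *ᵥ x = ((lam * α) • x + lam • (Wc *ᵥ y)) - Wc *ᵥ y := by
    linear_combination (norm := module) eq2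
  rw [eq2']
  module
end

section
/- Let W ∈ ℝ^{n×n} be symmetric positive definite and T ∈ ℝ^{n×n} be symmetric positive semidefinite. Let λ ∈ ℂ and u = (x; y) ∈ ℂ^{2n} with u ≠ 0 satisfy 𝒜u = λ𝒢_α u, where 𝒜 = [[W, −T], [T, W]] and 𝒢_α = [[W, 0], [αI, W]] for some α ∈ ℝ. If y ≠ 0 and λ ≠ 1, then a(1 − λ)² = αλb − c, where a = (y*Ty)/(y*y), b = (y*TW⁻²Ty)/(y*y) and c = (y*TW⁻¹TW⁻¹Ty)/(y*y). -/
open Matrix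

/-- Lemma 2, Eq. (12): If `(λ, (x; y))` is an eigenpair of `𝒢_α⁻¹𝒜` with
`y ≠ 0` and `λ ≠ 1`, then `a (1 - λ)² = α λ b - c` where `a, b, c` are the Rayleigh
quotients `a = y*Ty/(y*y)`, `b = y*TW⁻²Ty/(y*y)`, `c = y*TW⁻¹TW⁻¹Ty/(y*y)`. -/
theorem blt_eigen_quadratic {n : ℕ} (W T : Matrix (Fin n) (Fin n) ℝ)
    (hW : W.PosDef) (hT : T.PosSemidef) (α : ℝ) (lam : ℂ) (x y : Fin n → ℂ)
    (hu : Sum.elim x y ≠ 0)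
    (heig : Matrix.fromBlocks (W.map Complex.ofReal) (-(T.map Complex.ofReal))
        (T.map Complex.ofReal) (W.map Complex.ofReal) *ᵥ Sum.elim x y
      = lam • (Matrix.fromBlocks (W.map Complex.ofReal) 0 ((α : ℂ) • 1)
        (W.map Complex.ofReal) *ᵥ Sum.elim x y))
    (hy : y ≠ 0) (hlam : lam ≠ 1) (a b c : ℂ)
    (ha : a = (star y ⬝ᵥ (T.map Complex.ofReal *ᵥ y)) / (star y ⬝ᵥ y))
    (hb : b = (star y ⬝ᵥ ((T.map Complex.ofReal * (W.map Complex.ofReal)⁻¹ ^ 2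
        * T.map Complex.ofReal) *ᵥ y)) / (star y ⬝ᵥ y))
    (hc : c = (star y ⬝ᵥ ((T.map Complex.ofReal * (W.map Complex.ofReal)⁻¹
        * T.map Complex.ofReal * (W.map Complex.ofReal)⁻¹
        * T.map Complex.ofReal) *ᵥ y)) / (star y ⬝ᵥ y)) :
    a * (1 - lam) ^ 2 = (α : ℂ) * lam * b - c := by
  set Wc := W.map Complex.ofReal with hWc
  set Tc := T.map Complex.ofReal with hTc
  -- invertibility of Wc
  have hdet : IsUnit Wc.det := by
    have h1 : Wc.det = (W.det : ℂ) := by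
      rw [hWc]
      exact (RingHom.map_det Complex.ofRealHom W).symm
    rw [h1]
    simp [Ne.isUnit, Complex.ofReal_ne_zero, ne_of_gt hW.det_pos]
  have hinv : Wc⁻¹ * Wc = 1 := Matrix.nonsing_inv_mul Wc hdet
  -- component equations
  have h1 : Wc *ᵥ x - Tc *ᵥ y = lam • (Wc *ᵥ x) := by
    funext i
    have := congrFun heig (Sum.inl i)
    simp [Matrix.fromBlocks_mulVec, Matrix.neg_mulVec, sub_eq_add_neg] at this ⊢
    convert this using 2
  have h2 : Tc *ᵥ x + Wc *ᵥ y = lam • ((α : ℂ) • x + Wc *ᵥ y) := by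
    funext i
    have := congrFun heig (Sum.inr i)
    simp [Matrix.fromBlocks_mulVec, Matrix.smul_mulVec, Matrix.one_mulVec] at this ⊢
    convert this using 2
  set z := Wc⁻¹ *ᵥ (Tc *ᵥ y) with hz
  have hx : (1 - lam) • x = z := by
    have hWx : Wc *ᵥ ((1 - lam) • x) = Tc *ᵥ y := by
      rw [Matrix.mulVec_smul, sub_smul, one_smul, ← h1]
      abel
    rw [hz, ← hWx, Matrix.mulVec_mulVec, hinv, Matrix.one_mulVec]
  -- the key vector equation
  have hV : Tc *ᵥ z + ((1 - lam) ^ 2) • (Wc *ᵥ y) = ((α : ℂ) * lam) • z := by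
    have h2' : Tc *ᵥ x + (1 - lam) • (Wc *ᵥ y) = ((α : ℂ) * lam) • x := by
      rw [sub_smul, one_smul]
      have := h2
      rw [smul_add] at this
      have : Tc *ᵥ x + Wc *ᵥ y - lam • (Wc *ᵥ y) = lam • ((α : ℂ) • x) := by
        rw [this]; abel
      rw [← add_sub_assoc, this, smul_smul, mul_comm]
    calc Tc *ᵥ z + ((1 - lam) ^ 2) • (Wc *ᵥ y)
        = (1 - lam) • (Tc *ᵥ x + (1 - lam) • (Wc *ᵥ y)) := by
          rw [smul_add, smul_smul, ← sq, ← hx, Matrix.mulVec_smul]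
      _ = (1 - lam) • (((α : ℂ) * lam) • x) := by rw [h2']
      _ = ((α : ℂ) * lam) • z := by rw [smul_comm, hx]
  -- dot with y* T W⁻¹
  have key := congrArg (fun v => star y ⬝ᵥ ((Tc * Wc⁻¹) *ᵥ v)) hV
  simp only [Matrix.mulVec_add, Matrix.mulVec_smul, dotProduct_add,
    dotProduct_smul, smul_eq_mul] at key
  have k1 : star y ⬝ᵥ ((Tc * Wc⁻¹) *ᵥ (Tc *ᵥ z)) =
      star y ⬝ᵥ ((Tc * Wc⁻¹ * Tc * Wc⁻¹ * Tc) *ᵥ y) := by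
    rw [hz]
    simp [Matrix.mulVec_mulVec, mul_assoc]
  have k2 : star y ⬝ᵥ ((Tc * Wc⁻¹) *ᵥ (Wc *ᵥ y)) = star y ⬝ᵥ (Tc *ᵥ y) := by
    rw [Matrix.mulVec_mulVec, mul_assoc, hinv, mul_one]
  have k3 : star y ⬝ᵥ ((Tc * Wc⁻¹) *ᵥ z) =
      star y ⬝ᵥ ((Tc * Wc⁻¹ ^ 2 * Tc) *ᵥ y) := by
    rw [hz]
    simp [Matrix.mulVec_mulVec, sq, mul_assoc]
  rw [k1, k2, k3] at key
  -- denominators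
  have hs : (star y ⬝ᵥ y) ≠ 0 := by
    intro h
    open scoped ComplexOrder in
    exact hy ((dotProduct_star_self_eq_zero).mp h)
  rw [ha, hb, hc]
  set A := star y ⬝ᵥ (Tc *ᵥ y) with hA
  set B := star y ⬝ᵥ ((Tc * Wc⁻¹ ^ 2 * Tc) *ᵥ y) with hB
  set C := star y ⬝ᵥ ((Tc * Wc⁻¹ * Tc * Wc⁻¹ * Tc) *ᵥ y) with hC
  set s := star y ⬝ᵥ y with hS
  field_simp
  linear_combination key
end

section
/- Let W ∈ ℝ^{n×n} be symmetric positive definite and T ∈ ℝ^{n×n} be symmetric positive semidefinite. Let λ ∈ ℂ and u = (x; y) ∈ ℂ^{2n} with u ≠ 0 satisfy 𝒜u = λ𝒢_α u, where 𝒜 = [[W, −T], [T, W]] and 𝒢_α = [[W, 0], [αI, W]] for some α ∈ ℝ. Suppose y ≠ 0, λ ≠ 1, and a ≠ 0, where a = (y*Ty)/(y*y), b = (y*TW⁻²Ty)/(y*y), c = (y*TW⁻¹TW⁻¹Ty)/(y*y). If Δ(α) = α²b² + 4a(αb − c) ≤ 0, then |λ − 1|² = (c − αb)/a. -/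
/-!
The first block row gives `x = (1 - λ)⁻¹ W⁻¹ T y`. Substituting into the second block row and
pairing it with `W⁻¹ T y` turns the eigen-equation into the scalar quadratic
`a μ² - α b μ + (c - α b) = 0` for `μ = λ - 1`, whose coefficients are real because `W` and `T`
are symmetric. A real quadratic with nonpositive discriminant has either a double real root or
two conjugate roots; in both cases `|μ|²` is the product of the roots, `(c - α b) / a`.
-/

open Matrix

open scoped ComplexOrder

theorem Complex.sq_norm_eq_div_of_quadratic_eq_zero {a β γ : ℝ} {μ : ℂ} (ha : a ≠ 0)
    (hdisc : β ^ 2 - 4 * a * γ ≤ 0) (hμ : (a : ℂ) * μ ^ 2 + β * μ + γ = 0) :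
    ‖μ‖ ^ 2 = γ / a := by
  have hre := congrArg Complex.re hμ
  have him := congrArg Complex.im hμ
  simp only [Complex.add_re, Complex.add_im, Complex.mul_re, Complex.mul_im, Complex.ofReal_re,
    Complex.ofReal_im, pow_two, Complex.zero_re, Complex.zero_im] at hre him
  rw [Complex.sq_norm, Complex.normSq_apply]
  set p := μ.re
  set q := μ.im
  -- Both a real double root and a pair of conjugate roots sit at `re μ = -β / (2a)`.
  have hvertex : 2 * a * p + β = 0 := by
    rcases eq_or_ne q 0 with hq | hq
    · have hsq : (2 * a * p + β) ^ 2 = β ^ 2 - 4 * a * γ := by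
        rw [hq] at hre
        linear_combination 4 * a * hre
      exact pow_eq_zero_iff two_ne_zero |>.mp (le_antisymm (hsq ▸ hdisc) (sq_nonneg _))
    · have hprod : q * (2 * a * p + β) = 0 := by linear_combination him
      exact (mul_eq_zero.mp hprod).resolve_left hq
  field_simp
  linear_combination -hre + p * hvertex

namespace Matrix

variable {m 𝕜 : Type*} [Fintype m]

omit [Fintype m] in
theorem IsHermitian.map_ofReal {A : Matrix m m ℝ} (hA : A.IsHermitian) :
    (A.map Complex.ofReal).IsHermitian :=
  hA.map _ fun r => (Complex.conj_ofReal r).symm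

theorem IsHermitian.ofReal_re_rayleigh {M : Matrix m m ℂ} (hM : M.IsHermitian)
    (y : m → ℂ) :
    (((star y ⬝ᵥ M *ᵥ y) / (star y ⬝ᵥ y)).re : ℂ) = (star y ⬝ᵥ M *ᵥ y) / (star y ⬝ᵥ y) := by
  have hnum := hM.im_star_dotProduct_mulVec_self y
  classical
  have hden := (isHermitian_one (n := m) (α := ℂ)).im_star_dotProduct_mulVec_self y
  rw [one_mulVec] at hden
  rw [← Complex.conj_eq_iff_re, map_div₀, Complex.conj_eq_iff_im.mpr hnum,
    Complex.conj_eq_iff_im.mpr hden]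

theorem star_mulVec_dotProduct [CommSemiring 𝕜] [StarRing 𝕜] (P : Matrix m m 𝕜) (u v : m → 𝕜) :
    star (P *ᵥ u) ⬝ᵥ v = star u ⬝ᵥ Pᴴ *ᵥ v := by
  rw [star_mulVec, dotProduct_mulVec]

variable [DecidableEq m]

theorem fromBlocks_mulVec_eq_smul_iff [CommRing 𝕜] (W T : Matrix m m 𝕜) (α lam : 𝕜)
    (x y : m → 𝕜) :
    fromBlocks W (-T) T W *ᵥ Sum.elim x y = lam • (fromBlocks W 0 (α • 1) W *ᵥ Sum.elim x y) ↔
      W *ᵥ x - T *ᵥ y = lam • W *ᵥ x ∧ T *ᵥ x + W *ᵥ y = lam • (α • x + W *ᵥ y) := by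
  have hsmul (u v : m → 𝕜) : lam • Sum.elim u v = Sum.elim (lam • u) (lam • v) := by
    ext (i | i) <;> rfl
  simp [fromBlocks_mulVec, hsmul, Sum.elim_eq_iff, sub_eq_add_neg, neg_mulVec, smul_mulVec]

variable [Field 𝕜] {W T : Matrix m m 𝕜} {α lam : 𝕜} {x y : m → 𝕜}

theorem eq_smul_inv_mul_mulVec_of_sub_mulVec_eq (hW : IsUnit W.det) (hlam : lam ≠ 1)
    (h : W *ᵥ x - T *ᵥ y = lam • W *ᵥ x) : x = (1 - lam)⁻¹ • (W⁻¹ * T) *ᵥ y := by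
  have hlam' : 1 - lam ≠ 0 := sub_ne_zero.mpr hlam.symm
  have hWx : W *ᵥ x = (1 - lam)⁻¹ • T *ᵥ y := by
    rw [eq_inv_smul_iff₀ hlam', sub_smul, one_smul, sub_eq_iff_eq_add, ← sub_eq_iff_eq_add', h]
  rw [← mulVec_mulVec, ← mulVec_smul, ← hWx, mulVec_mulVec, nonsing_inv_mul _ hW, one_mulVec]

theorem IsHermitian.isHermitian_mul_inv_pow_two_mul [StarRing 𝕜] (hW : W.IsHermitian)
    (hT : T.IsHermitian) : (T * W⁻¹ ^ 2 * T).IsHermitian := by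
  simp only [IsHermitian, conjTranspose_mul, conjTranspose_pow, conjTranspose_nonsing_inv, hT.eq,
    hW.eq, Matrix.mul_assoc]

theorem IsHermitian.isHermitian_mul_inv_mul_mul_inv_mul [StarRing 𝕜] (hW : W.IsHermitian)
    (hT : T.IsHermitian) : (T * W⁻¹ * T * W⁻¹ * T).IsHermitian := by
  simp only [IsHermitian, conjTranspose_mul, conjTranspose_nonsing_inv, hT.eq, hW.eq,
    Matrix.mul_assoc]

theorem quadratic_eq_zero_of_eigen_blocks [StarRing 𝕜] (hW : W.IsHermitian) (hWu : IsUnit W.det)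
    (hT : T.IsHermitian) (hlam : lam ≠ 1) (h₁ : W *ᵥ x - T *ᵥ y = lam • W *ᵥ x)
    (h₂ : T *ᵥ x + W *ᵥ y = lam • (α • x + W *ᵥ y)) :
    star y ⬝ᵥ T *ᵥ y * (lam - 1) ^ 2 - α * (star y ⬝ᵥ (T * W⁻¹ ^ 2 * T) *ᵥ y) * (lam - 1)
      + (star y ⬝ᵥ (T * W⁻¹ * T * W⁻¹ * T) *ᵥ y - α * (star y ⬝ᵥ (T * W⁻¹ ^ 2 * T) *ᵥ y)) = 0 := by
  have hadj : (W⁻¹ * T)ᴴ = T * W⁻¹ := by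
    rw [conjTranspose_mul, hT.eq, conjTranspose_nonsing_inv, hW.eq]
  have hzW : star ((W⁻¹ * T) *ᵥ y) ⬝ᵥ W *ᵥ y = star y ⬝ᵥ T *ᵥ y := by
    rw [star_mulVec_dotProduct, hadj, mulVec_mulVec, Matrix.mul_assoc, nonsing_inv_mul _ hWu,
      Matrix.mul_one]
  have hzz : star ((W⁻¹ * T) *ᵥ y) ⬝ᵥ (W⁻¹ * T) *ᵥ y = star y ⬝ᵥ (T * W⁻¹ ^ 2 * T) *ᵥ y := by
    rw [star_mulVec_dotProduct, hadj, mulVec_mulVec, sq]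
    simp only [Matrix.mul_assoc]
  have hzTz : star ((W⁻¹ * T) *ᵥ y) ⬝ᵥ T *ᵥ (W⁻¹ * T) *ᵥ y
      = star y ⬝ᵥ (T * W⁻¹ * T * W⁻¹ * T) *ᵥ y := by
    rw [star_mulVec_dotProduct, hadj, mulVec_mulVec, mulVec_mulVec]
    simp only [Matrix.mul_assoc]
  have hpair := congrArg (star ((W⁻¹ * T) *ᵥ y) ⬝ᵥ ·) h₂
  simp only [eq_smul_inv_mul_mulVec_of_sub_mulVec_eq hWu hlam h₁, mulVec_smul, dotProduct_add,
    dotProduct_smul, smul_eq_mul, hzW, hzz, hzTz] at hpair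
  have hlam' : 1 - lam ≠ 0 := sub_ne_zero.mpr hlam.symm
  field_simp at hpair
  linear_combination hpair

end Matrix

theorem blt_eigen_radius_general {n : ℕ} (W T : Matrix (Fin n) (Fin n) ℝ)
    (hW : W.PosDef) (hT : T.PosSemidef) (α : ℝ) (lam : ℂ) (x y : Fin n → ℂ)
    (heig : Matrix.fromBlocks (W.map Complex.ofReal) (-(T.map Complex.ofReal))
        (T.map Complex.ofReal) (W.map Complex.ofReal) *ᵥ Sum.elim x y
      = lam • (Matrix.fromBlocks (W.map Complex.ofReal) 0 ((α : ℂ) • 1)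
        (W.map Complex.ofReal) *ᵥ Sum.elim x y))
    (hy : y ≠ 0) (hlam : lam ≠ 1) (a b c : ℝ)
    (ha : a = ((star y ⬝ᵥ (T.map Complex.ofReal *ᵥ y)) / (star y ⬝ᵥ y)).re)
    (hb : b = ((star y ⬝ᵥ ((T.map Complex.ofReal * (W.map Complex.ofReal)⁻¹ ^ 2
        * T.map Complex.ofReal) *ᵥ y)) / (star y ⬝ᵥ y)).re)
    (hc : c = ((star y ⬝ᵥ ((T.map Complex.ofReal * (W.map Complex.ofReal)⁻¹
        * T.map Complex.ofReal * (W.map Complex.ofReal)⁻¹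
        * T.map Complex.ofReal) *ᵥ y)) / (star y ⬝ᵥ y)).re)
    (ha0 : a ≠ 0) (hΔ : α ^ 2 * b ^ 2 + 4 * a * (α * b - c) ≤ 0) :
    ‖lam - 1‖ ^ 2 = (c - α * b) / a := by
  set Wc := W.map Complex.ofReal
  set Tc := T.map Complex.ofReal
  have hWc : Wc.IsHermitian := hW.isHermitian.map_ofReal
  have hTc : Tc.IsHermitian := hT.isHermitian.map_ofReal
  have hWu : IsUnit Wc.det :=
    (isUnit_iff_isUnit_det _).mp (hW.isUnit.map Complex.ofRealHom.mapMatrix)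
  obtain ⟨h₁, h₂⟩ := (fromBlocks_mulVec_eq_smul_iff Wc Tc α lam x y).mp heig
  have hquad := quadratic_eq_zero_of_eigen_blocks hWc hWu hTc hlam h₁ h₂
  have ha' : (a : ℂ) = star y ⬝ᵥ Tc *ᵥ y / (star y ⬝ᵥ y) := by
    rw [ha, hTc.ofReal_re_rayleigh]
  have hb' : (b : ℂ) = star y ⬝ᵥ (Tc * Wc⁻¹ ^ 2 * Tc) *ᵥ y / (star y ⬝ᵥ y) := by
    rw [hb, (hWc.isHermitian_mul_inv_pow_two_mul hTc).ofReal_re_rayleigh]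
  have hc' : (c : ℂ) = star y ⬝ᵥ (Tc * Wc⁻¹ * Tc * Wc⁻¹ * Tc) *ᵥ y / (star y ⬝ᵥ y) := by
    rw [hc, (hWc.isHermitian_mul_inv_mul_mul_inv_mul hTc).ofReal_re_rayleigh]
  have hN : star y ⬝ᵥ y ≠ 0 := fun h => hy (dotProduct_star_self_eq_zero.mp h)
  refine Complex.sq_norm_eq_div_of_quadratic_eq_zero (β := -(α * b)) ha0 (by linarith) ?_
  push_cast
  rw [ha', hb', hc']
  field_simp
  linear_combination hquad

/-- For an eigenpair `(λ, (x; y))` of `𝒢_α⁻¹𝒜` with `y ≠ 0`, `λ ≠ 1`,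
`a ≠ 0` and nonpositive discriminant `Δ(α) = α²b² + 4a(αb - c) ≤ 0`, one has
`|λ - 1|² = (c - αb)/a`. Here `a, b, c` are the (real) Rayleigh quotients. -/
theorem blt_eigen_radius {n : ℕ} (W T : Matrix (Fin n) (Fin n) ℝ)
    (hW : W.PosDef) (hT : T.PosSemidef) (α : ℝ) (lam : ℂ) (x y : Fin n → ℂ)
    (hu : Sum.elim x y ≠ 0)
    (heig : Matrix.fromBlocks (W.map Complex.ofReal) (-(T.map Complex.ofReal))
        (T.map Complex.ofReal) (W.map Complex.ofReal) *ᵥ Sum.elim x y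
      = lam • (Matrix.fromBlocks (W.map Complex.ofReal) 0 ((α : ℂ) • 1)
        (W.map Complex.ofReal) *ᵥ Sum.elim x y))
    (hy : y ≠ 0) (hlam : lam ≠ 1) (a b c : ℝ)
    (ha : a = ((star y ⬝ᵥ (T.map Complex.ofReal *ᵥ y)) / (star y ⬝ᵥ y)).re)
    (hb : b = ((star y ⬝ᵥ ((T.map Complex.ofReal * (W.map Complex.ofReal)⁻¹ ^ 2
        * T.map Complex.ofReal) *ᵥ y)) / (star y ⬝ᵥ y)).re)
    (hc : c = ((star y ⬝ᵥ ((T.map Complex.ofReal * (W.map Complex.ofReal)⁻¹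
        * T.map Complex.ofReal * (W.map Complex.ofReal)⁻¹
        * T.map Complex.ofReal) *ᵥ y)) / (star y ⬝ᵥ y)).re)
    (ha0 : a ≠ 0) (hΔ : α ^ 2 * b ^ 2 + 4 * a * (α * b - c) ≤ 0) :
    ‖lam - 1‖ ^ 2 = (c - α * b) / a :=
  blt_eigen_radius_general W T hW hT α lam x y heig hy hlam a b c ha hb hc ha0 hΔ
end

section
/- Let W ∈ ℝ^{n×n} be symmetric positive definite with smallest eigenvalue ν₁ and largest eigenvalue ν_n, and let T ∈ ℝ^{n×n} be symmetric positive definite with smallest eigenvalue μ₁ > 0 and largest eigenvalue μ_n. Let λ ∈ ℂ and u = (x; y) ∈ ℂ^{2n} with u ≠ 0 satisfy 𝒜u = λ𝒢_α u, where 𝒜 = [[W, −T], [T, W]] and 𝒢_α = [[W, 0], [αI, W]] for some α > 0. Suppose y ≠ 0 and that if b ≠ 0 then α ≤ (2/b)(√(a(a + c)) − a), where a = (y*Ty)/(y*y), b = (y*TW⁻²Ty)/(y*y), c = (y*TW⁻¹TW⁻¹Ty)/(y*y). Then |λ − 1| ≤ √((μ_n³ν_n² − αμ₁²ν₁²)/(ν₁²ν_n²μ₁)).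 -/
/-!
Eliminating `x` from the block equations shows that `w = W⁻¹Ty` satisfies
`Tw - λαw = -(λ - 1)² Wy`; pairing with `w` turns this into the real quadratic equation
`a μ² - αb μ + (c - αb) = 0` for `μ = λ - 1`. The hypothesis on `α` makes its discriminant
nonpositive, so `|μ|² = (c - αb)/a`, and the spectral bounds `a ≥ μ₁`, `b ≥ μ₁²/νₙ²`,
`c ≤ μₙ³/ν₁²` give the radius.
-/

open Matrix MatrixOrder Set ComplexOrder

theorem Complex.normSq_eq_div_of_discrim_nonpos {a p q : ℝ} (ha : 0 < a)
    (hdisc : discrim a p q ≤ 0) {z : ℂ} (hz : a * (z * z) + p * z + q = 0) :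
    Complex.normSq z = q / a := by
  have hre : a * (z.re * z.re - z.im * z.im) + p * z.re + q = 0 := by
    simpa using congrArg Complex.re hz
  have him : a * (z.re * z.im + z.im * z.re) + p * z.im = 0 := by
    simpa using congrArg Complex.im hz
  -- if `z` is not real this is the imaginary part; if it is, `z` is a double root
  have hvertex : 2 * a * z.re + p = 0 := by
    refine (mul_eq_zero.1 (by linear_combination him : (2 * a * z.re + p) * z.im = 0)).elim id
      fun him0 => ?_
    rw [him0] at hre
    have hsq : (2 * a * z.re + p) ^ 2 = discrim a p q := by
      rw [discrim]; linear_combination 4 * a * hre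
    exact pow_eq_zero_iff two_ne_zero |>.1 (le_antisymm (hsq ▸ hdisc) (sq_nonneg _))
  rw [Complex.normSq_apply, eq_div_iff ha.ne']
  linear_combination -hre + z.re * hvertex

theorem discrim_nonpos_of_le_two_div_mul {a b c α : ℝ} (ha : 0 < a) (hb : 0 < b) (hα : 0 ≤ α)
    (h : α ≤ 2 / b * (Real.sqrt (a * (a + c)) - a)) :
    discrim a (-(α * b)) (c - α * b) ≤ 0 := by
  have hle : α * b / 2 + a ≤ Real.sqrt (a * (a + c)) := by
    rw [div_mul_eq_mul_div, le_div_iff₀ hb] at h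
    linarith
  have hpos : 0 < α * b / 2 + a := by positivity
  have hsq := pow_le_pow_left₀ hpos.le hle 2
  rw [Real.sq_sqrt (Real.sqrt_pos.1 (hpos.trans_le hle)).le] at hsq
  rw [discrim]
  linarith

theorem sub_mul_div_le_of_discrim_nonpos {a b c α μ₁ μₙ ν₁ νₙ : ℝ} (hμ₁ : 0 < μ₁)
    (hν₁ : 0 < ν₁) (hνₙ : 0 < νₙ) (hα : 0 ≤ α) (ha : μ₁ ≤ a) (hb : μ₁ ^ 2 ≤ νₙ ^ 2 * b)
    (hc : c * ν₁ ^ 2 ≤ μₙ ^ 3) (hdisc : discrim a (-(α * b)) (c - α * b) ≤ 0) :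
    (c - α * b) / a ≤ (μₙ ^ 3 * νₙ ^ 2 - α * μ₁ ^ 2 * ν₁ ^ 2) / (ν₁ ^ 2 * νₙ ^ 2 * μ₁) := by
  have hq : 0 ≤ c - α * b := by
    rw [discrim] at hdisc
    nlinarith [sq_nonneg (α * b)]
  calc (c - α * b) / a ≤ (c - α * b) / μ₁ := div_le_div_of_nonneg_left hq hμ₁ ha
    _ ≤ _ := by
      rw [div_le_div_iff₀ hμ₁ (by positivity)]
      nlinarith [mul_le_mul_of_nonneg_left hb (mul_nonneg hα (sq_nonneg ν₁)),
        mul_le_mul_of_nonneg_right hc (sq_nonneg νₙ)]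

namespace Matrix

section Rayleigh

variable {𝕜 n : Type*} [RCLike 𝕜] [Fintype n]

def rayleighQuotient (A : Matrix n n 𝕜) (v : n → 𝕜) : ℝ :=
  RCLike.re ((star v ⬝ᵥ (A *ᵥ v)) / (star v ⬝ᵥ v))

theorem im_dotProduct_star_self (v : n → 𝕜) : RCLike.im (star v ⬝ᵥ v) = 0 :=
  (RCLike.nonneg_iff.1 (dotProduct_star_self_nonneg v)).2

theorem ofReal_re_dotProduct_star_self (v : n → 𝕜) :
    (RCLike.re (star v ⬝ᵥ v) : 𝕜) = star v ⬝ᵥ v :=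
  RCLike.conj_eq_iff_re.1 <| RCLike.conj_eq_iff_im.2 (im_dotProduct_star_self v)

theorem re_dotProduct_star_self_pos {v : n → 𝕜} (hv : v ≠ 0) : 0 < RCLike.re (star v ⬝ᵥ v) :=
  (RCLike.pos_iff.1 (dotProduct_star_self_pos_iff.2 hv)).1

theorem rayleighQuotient_mul_re (A : Matrix n n 𝕜) (v : n → 𝕜) :
    A.rayleighQuotient v * RCLike.re (star v ⬝ᵥ v) = RCLike.re (star v ⬝ᵥ (A *ᵥ v)) := by
  rcases eq_or_ne v 0 with rfl | hv
  · simp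
  rw [rayleighQuotient, ← ofReal_re_dotProduct_star_self v, RCLike.div_re_ofReal,
    RCLike.ofReal_re, div_mul_cancel₀ _ (re_dotProduct_star_self_pos hv).ne']

theorem ofReal_rayleighQuotient_mul {A : Matrix n n 𝕜} {v : n → 𝕜}
    (h : RCLike.im (star v ⬝ᵥ (A *ᵥ v)) = 0) :
    (A.rayleighQuotient v : 𝕜) * (star v ⬝ᵥ v) = star v ⬝ᵥ (A *ᵥ v) := by
  rw [← ofReal_re_dotProduct_star_self v, ← RCLike.ofReal_mul, rayleighQuotient_mul_re]
  exact RCLike.conj_eq_iff_re.1 (RCLike.conj_eq_iff_im.2 h)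

variable [DecidableEq n] {A : Matrix n n 𝕜}

theorem IsHermitian.re_dotProduct_mulVec_mem_Icc (hA : A.IsHermitian) {l r : ℝ}
    (hσ : spectrum ℝ A ⊆ Icc l r) (v : n → 𝕜) :
    RCLike.re (star v ⬝ᵥ (A *ᵥ v)) ∈
      Icc (l * RCLike.re (star v ⬝ᵥ v)) (r * RCLike.re (star v ⬝ᵥ v)) := by
  have hl : algebraMap ℝ _ l ≤ A :=
    algebraMap_le_of_le_spectrum (fun x hx => (hσ hx).1) hA.isSelfAdjoint
  have hr : A ≤ algebraMap ℝ _ r :=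
    le_algebraMap_of_spectrum_le (fun x hx => (hσ hx).2) hA.isSelfAdjoint
  have h₁ := (le_iff.mp hl).re_dotProduct_nonneg v
  have h₂ := (le_iff.mp hr).re_dotProduct_nonneg v
  simp only [Algebra.algebraMap_eq_smul_one, sub_mulVec, smul_mulVec, one_mulVec,
    dotProduct_sub, dotProduct_smul, map_sub, RCLike.smul_re] at h₁ h₂
  constructor <;> linarith

theorem IsHermitian.rayleighQuotient_mem_Icc (hA : A.IsHermitian) {l r : ℝ}
    (hσ : spectrum ℝ A ⊆ Icc l r) {v : n → 𝕜} (hv : v ≠ 0) :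
    A.rayleighQuotient v ∈ Icc l r := by
  have hpos := re_dotProduct_star_self_pos hv
  obtain ⟨hl, hr⟩ := hA.re_dotProduct_mulVec_mem_Icc hσ v
  rw [← rayleighQuotient_mul_re] at hl hr
  exact ⟨le_of_mul_le_mul_right hl hpos, le_of_mul_le_mul_right hr hpos⟩

theorem IsHermitian.spectrum_mul_self (hA : A.IsHermitian) :
    spectrum ℝ (A * A) = (· ^ 2) '' spectrum ℝ A := by
  rw [← sq, ← cfc_pow_id (R := ℝ) A 2 hA.isSelfAdjoint, cfc_map_spectrum _ _ hA.isSelfAdjoint]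

theorem IsHermitian.re_star_mulVec_dotProduct_mem_Icc (hA : A.IsHermitian) {l r : ℝ}
    (hl : 0 ≤ l) (hσ : spectrum ℝ A ⊆ Icc l r) (v : n → 𝕜) :
    RCLike.re (star (A *ᵥ v) ⬝ᵥ (A *ᵥ v)) ∈
      Icc (l ^ 2 * RCLike.re (star v ⬝ᵥ v)) (r ^ 2 * RCLike.re (star v ⬝ᵥ v)) := by
  have hσ₂ : spectrum ℝ (A * A) ⊆ Icc (l ^ 2) (r ^ 2) := by
    rw [hA.spectrum_mul_self]
    rintro _ ⟨x, hx, rfl⟩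
    exact ⟨pow_le_pow_left₀ hl (hσ hx).1 2, pow_le_pow_left₀ (hl.trans (hσ hx).1) (hσ hx).2 2⟩
  rw [star_mulVec, hA.eq, ← dotProduct_mulVec, mulVec_mulVec]
  exact (by simpa only [sq] using hA.pow 2 : (A * A).IsHermitian).re_dotProduct_mulVec_mem_Icc hσ₂ v

end Rayleigh

section Complexification

theorem IsHermitian.map_ofReal_s14 {n : Type*} {M : Matrix n n ℝ} (hM : M.IsHermitian) :
    (M.map Complex.ofReal).IsHermitian :=
  hM.map _ fun _ => by simp

variable {n : Type*} [Fintype n] [DecidableEq n]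

theorem IsHermitian.spectrum_map_ofReal_subset_Icc {M : Matrix n n ℝ} (hM : M.IsHermitian)
    {l r : ℝ} (hl : l ∈ lowerBounds (range hM.eigenvalues))
    (hr : r ∈ upperBounds (range hM.eigenvalues)) :
    spectrum ℝ (M.map Complex.ofReal) ⊆ Icc l r := by
  -- complexification is an `ℝ`-algebra map, and algebra maps can only shrink spectra
  refine (AlgHom.spectrum_apply_subset Complex.ofRealAm.mapMatrix M).trans ?_
  rw [hM.spectrum_real_eq_range_eigenvalues]
  exact fun x hx => ⟨hl hx, hr hx⟩

theorem PosDef.isUnit_map_ofReal {M : Matrix n n ℝ} (hM : M.PosDef) :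
    IsUnit (M.map Complex.ofReal) :=
  hM.isUnit.map Complex.ofRealAm.mapMatrix

end Complexification

section BlockEigenproblem

theorem IsHermitian.star_dotProduct_mulVec {n R : Type*} [Fintype n] [CommSemiring R]
    [StarRing R] {W : Matrix n n R} (hW : W.IsHermitian) (u v : n → R) :
    star u ⬝ᵥ (W *ᵥ v) = star (W *ᵥ u) ⬝ᵥ v := by
  rw [star_mulVec, hW.eq, dotProduct_mulVec]

variable {n K : Type*} [Fintype n] [DecidableEq n] [Field K] {W T : Matrix n n K}

theorem fromBlocks_mulVec_eigen_iff {α lam : K} {x y : n → K} :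
    fromBlocks W (-T) T W *ᵥ Sum.elim x y = lam • (fromBlocks W 0 (α • 1) W *ᵥ Sum.elim x y) ↔
      W *ᵥ x - T *ᵥ y = lam • W *ᵥ x ∧ T *ᵥ x + W *ᵥ y = lam • (α • x + W *ᵥ y) := by
  simp only [funext_iff, Sum.forall, fromBlocks_mulVec, Pi.smul_apply, Sum.elim_inl,
    Sum.elim_inr, Sum.elim_comp_inl, Sum.elim_comp_inr, neg_mulVec, sub_eq_add_neg,
    smul_mulVec, one_mulVec, zero_mulVec, add_zero]

theorem mulVec_nonsing_inv_mulVec (hW : IsUnit W) (v : n → K) : W *ᵥ (W⁻¹ *ᵥ v) = v := by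
  rw [mulVec_mulVec, mul_nonsing_inv _ ((isUnit_iff_isUnit_det W).1 hW), one_mulVec]

variable [StarRing K]

theorem star_dotProduct_mulVec_eq_neg_sq_mul (hW : W.IsHermitian) (hT : T.IsHermitian)
    (hWu : IsUnit W) {α lam : K} {x y w : n → K} (hw : W *ᵥ w = T *ᵥ y)
    (htop : W *ᵥ x - T *ᵥ y = lam • W *ᵥ x)
    (hbot : T *ᵥ x + W *ᵥ y = lam • (α • x + W *ᵥ y)) :
    star w ⬝ᵥ (T *ᵥ w) - lam * α * (star w ⬝ᵥ w) = -(lam - 1) ^ 2 * (star y ⬝ᵥ (T *ᵥ y)) := by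
  have hwx : w = (1 - lam) • x := mulVec_injective_iff_isUnit.2 hWu <| by
    rw [hw, mulVec_smul]
    linear_combination (norm := module) -htop
  have hE : T *ᵥ w - (lam * α) • w = -(lam - 1) ^ 2 • (W *ᵥ y) := by
    rw [hwx, mulVec_smul, smul_smul]
    linear_combination (norm := module) (1 - lam) • hbot
  calc star w ⬝ᵥ (T *ᵥ w) - lam * α * (star w ⬝ᵥ w)
      = star w ⬝ᵥ (T *ᵥ w - (lam * α) • w) := by
        rw [dotProduct_sub, dotProduct_smul, smul_eq_mul]
    _ = -(lam - 1) ^ 2 * (star y ⬝ᵥ (T *ᵥ y)) := by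
      rw [hE, dotProduct_smul, hW.star_dotProduct_mulVec, hw, ← hT.star_dotProduct_mulVec,
        smul_eq_mul]

theorem star_dotProduct_mul_inv_sq_mul_mulVec (hW : W.IsHermitian) (hT : T.IsHermitian)
    (y : n → K) :
    star y ⬝ᵥ ((T * W⁻¹ ^ 2 * T) *ᵥ y) = star (W⁻¹ *ᵥ (T *ᵥ y)) ⬝ᵥ (W⁻¹ *ᵥ (T *ᵥ y)) := by
  rw [sq, ← mulVec_mulVec, ← mulVec_mulVec, ← mulVec_mulVec, hT.star_dotProduct_mulVec,
    hW.inv.star_dotProduct_mulVec]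

theorem star_dotProduct_mul_inv_mul_mul_inv_mul_mulVec (hW : W.IsHermitian)
    (hT : T.IsHermitian) (y : n → K) :
    star y ⬝ᵥ ((T * W⁻¹ * T * W⁻¹ * T) *ᵥ y)
      = star (W⁻¹ *ᵥ (T *ᵥ y)) ⬝ᵥ (T *ᵥ (W⁻¹ *ᵥ (T *ᵥ y))) := by
  simp only [← mulVec_mulVec]
  rw [hT.star_dotProduct_mulVec, hW.inv.star_dotProduct_mulVec]

end BlockEigenproblem

section SpectralBounds

variable {𝕜 n : Type*} [RCLike 𝕜] [Fintype n] [DecidableEq n] {W T : Matrix n n 𝕜}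
  {ν₁ νₙ μ₁ μₙ : ℝ}

theorem sq_le_sq_mul_rayleighQuotient_mul_inv_sq_mul (hW : W.IsHermitian) (hT : T.IsHermitian)
    (hWu : IsUnit W) (hν₁ : 0 ≤ ν₁) (hWσ : spectrum ℝ W ⊆ Icc ν₁ νₙ) (hμ₁ : 0 ≤ μ₁)
    (hTσ : spectrum ℝ T ⊆ Icc μ₁ μₙ) {y : n → 𝕜} (hy : y ≠ 0) :
    μ₁ ^ 2 ≤ νₙ ^ 2 * (T * W⁻¹ ^ 2 * T).rayleighQuotient y := by
  set w := W⁻¹ *ᵥ (T *ᵥ y)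
  have hWw : W *ᵥ w = T *ᵥ y := mulVec_nonsing_inv_mulVec hWu _
  have hb := rayleighQuotient_mul_re (T * W⁻¹ ^ 2 * T) y
  rw [star_dotProduct_mul_inv_sq_mul_mulVec hW hT] at hb
  have hTy := (hT.re_star_mulVec_dotProduct_mem_Icc hμ₁ hTσ y).1
  have hWw' := (hW.re_star_mulVec_dotProduct_mem_Icc hν₁ hWσ w).2
  rw [hWw] at hWw'
  refine le_of_mul_le_mul_right ?_ (re_dotProduct_star_self_pos hy)
  rw [mul_assoc, hb]
  exact hTy.trans hWw'

theorem rayleighQuotient_mul_inv_mul_mul_inv_mul_mul_sq_le (hW : W.IsHermitian)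
    (hT : T.IsHermitian) (hWu : IsUnit W) (hν₁ : 0 ≤ ν₁) (hWσ : spectrum ℝ W ⊆ Icc ν₁ νₙ)
    (hμ₁ : 0 ≤ μ₁) (hTσ : spectrum ℝ T ⊆ Icc μ₁ μₙ) {y : n → 𝕜} (hy : y ≠ 0) :
    (T * W⁻¹ * T * W⁻¹ * T).rayleighQuotient y * ν₁ ^ 2 ≤ μₙ ^ 3 := by
  set w := W⁻¹ *ᵥ (T *ᵥ y)
  have hWw : W *ᵥ w = T *ᵥ y := mulVec_nonsing_inv_mulVec hWu _
  have hc := rayleighQuotient_mul_re (T * W⁻¹ * T * W⁻¹ * T) y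
  rw [star_dotProduct_mul_inv_mul_mul_inv_mul_mulVec hW hT] at hc
  have hμₙ : 0 ≤ μₙ := hμ₁.trans ((hT.rayleighQuotient_mem_Icc hTσ hy).1.trans
    (hT.rayleighQuotient_mem_Icc hTσ hy).2)
  have hTw := (hT.re_dotProduct_mulVec_mem_Icc hTσ w).2
  have hTy := (hT.re_star_mulVec_dotProduct_mem_Icc hμ₁ hTσ y).2
  have hWw' := (hW.re_star_mulVec_dotProduct_mem_Icc hν₁ hWσ w).1
  rw [hWw] at hWw'
  refine le_of_mul_le_mul_right ?_ (re_dotProduct_star_self_pos hy)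
  calc _ = ν₁ ^ 2 * RCLike.re (star w ⬝ᵥ (T *ᵥ w)) := by rw [mul_right_comm, hc, mul_comm]
    _ ≤ ν₁ ^ 2 * (μₙ * RCLike.re (star w ⬝ᵥ w)) := by gcongr
    _ = μₙ * (ν₁ ^ 2 * RCLike.re (star w ⬝ᵥ w)) := by ring
    _ ≤ μₙ * (μₙ ^ 2 * RCLike.re (star y ⬝ᵥ y)) := mul_le_mul_of_nonneg_left (hWw'.trans hTy) hμₙ
    _ = _ := by ring

end SpectralBounds

theorem quadratic_eq_zero_of_fromBlocks_mulVec_eigen {n : Type*} [Fintype n] [DecidableEq n]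
    {W T : Matrix n n ℂ} (hW : W.IsHermitian) (hT : T.IsHermitian) (hWu : IsUnit W)
    {α a b c : ℝ} {lam : ℂ} {x y : n → ℂ} (hy : y ≠ 0)
    (heig : fromBlocks W (-T) T W *ᵥ Sum.elim x y
      = lam • (fromBlocks W 0 ((α : ℂ) • 1) W *ᵥ Sum.elim x y))
    (ha : a = T.rayleighQuotient y) (hb : b = (T * W⁻¹ ^ 2 * T).rayleighQuotient y)
    (hc : c = (T * W⁻¹ * T * W⁻¹ * T).rayleighQuotient y) :
    (a : ℂ) * ((lam - 1) * (lam - 1)) + (-(α * b) : ℝ) * (lam - 1) + (c - α * b : ℝ) = 0 := by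
  obtain ⟨htop, hbot⟩ := fromBlocks_mulVec_eigen_iff.1 heig
  set w := W⁻¹ *ᵥ (T *ᵥ y)
  have key := star_dotProduct_mulVec_eq_neg_sq_mul hW hT hWu
    (mulVec_nonsing_inv_mulVec hWu (T *ᵥ y)) htop hbot
  have hA : (a : ℂ) * (star y ⬝ᵥ y) = star y ⬝ᵥ (T *ᵥ y) :=
    ha ▸ ofReal_rayleighQuotient_mul (hT.im_star_dotProduct_mulVec_self y)
  have hB : (b : ℂ) * (star y ⬝ᵥ y) = star w ⬝ᵥ w := by
    have h := star_dotProduct_mul_inv_sq_mul_mulVec hW hT y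
    rw [hb, ← h]
    exact ofReal_rayleighQuotient_mul (h ▸ im_dotProduct_star_self w)
  have hC : (c : ℂ) * (star y ⬝ᵥ y) = star w ⬝ᵥ (T *ᵥ w) := by
    have h := star_dotProduct_mul_inv_mul_mul_inv_mul_mulVec hW hT y
    rw [hc, ← h]
    exact ofReal_rayleighQuotient_mul (h ▸ hT.im_star_dotProduct_mulVec_self w)
  refine mul_right_cancel₀ (dotProduct_star_self_pos_iff.2 hy).ne' ?_
  rw [← hA, ← hB, ← hC] at key
  push_cast
  linear_combination key

end Matrix

theorem blt_eigen_uniform_disk_general {n : ℕ} (W T : Matrix (Fin n) (Fin n) ℝ)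
    (hW : W.PosDef) (hT : T.PosDef) (ν₁ νₙ μ₁ μₙ : ℝ)
    (hν₁ : IsLeast (Set.range hW.1.eigenvalues) ν₁)
    (hνₙ : IsGreatest (Set.range hW.1.eigenvalues) νₙ)
    (hμ₁ : IsLeast (Set.range hT.1.eigenvalues) μ₁)
    (hμₙ : IsGreatest (Set.range hT.1.eigenvalues) μₙ)
    (α : ℝ) (hα : 0 < α) (lam : ℂ) (x y : Fin n → ℂ)
    (heig : Matrix.fromBlocks (W.map Complex.ofReal) (-(T.map Complex.ofReal))
        (T.map Complex.ofReal) (W.map Complex.ofReal) *ᵥ Sum.elim x y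
      = lam • (Matrix.fromBlocks (W.map Complex.ofReal) 0 ((α : ℂ) • 1)
        (W.map Complex.ofReal) *ᵥ Sum.elim x y))
    (hy : y ≠ 0) (a b c : ℝ)
    (ha : a = ((star y ⬝ᵥ (T.map Complex.ofReal *ᵥ y)) / (star y ⬝ᵥ y)).re)
    (hb : b = ((star y ⬝ᵥ ((T.map Complex.ofReal * (W.map Complex.ofReal)⁻¹ ^ 2
        * T.map Complex.ofReal) *ᵥ y)) / (star y ⬝ᵥ y)).re)
    (hc : c = ((star y ⬝ᵥ ((T.map Complex.ofReal * (W.map Complex.ofReal)⁻¹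
        * T.map Complex.ofReal * (W.map Complex.ofReal)⁻¹
        * T.map Complex.ofReal) *ᵥ y)) / (star y ⬝ᵥ y)).re)
    (hαle : b ≠ 0 → α ≤ (2 / b) * (Real.sqrt (a * (a + c)) - a)) :
    ‖lam - 1‖
      ≤ Real.sqrt ((μₙ ^ 3 * νₙ ^ 2 - α * μ₁ ^ 2 * ν₁ ^ 2)
          / (ν₁ ^ 2 * νₙ ^ 2 * μ₁)) := by
  have hν₁pos : 0 < ν₁ := by obtain ⟨i, rfl⟩ := hν₁.1; exact hW.eigenvalues_pos i
  have hμ₁pos : 0 < μ₁ := by obtain ⟨i, rfl⟩ := hμ₁.1; exact hT.eigenvalues_pos i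
  have hνₙpos : 0 < νₙ := hν₁pos.trans_le (hν₁.2 hνₙ.1)
  have hWσ := hW.1.spectrum_map_ofReal_subset_Icc hν₁.2 hνₙ.2
  have hTσ := hT.1.spectrum_map_ofReal_subset_Icc hμ₁.2 hμₙ.2
  have hWc := hW.1.map_ofReal_s14
  have hTc := hT.1.map_ofReal_s14
  have hWu := hW.isUnit_map_ofReal
  have ha' : μ₁ ≤ a := ha ▸ (hTc.rayleighQuotient_mem_Icc hTσ hy).1
  have hb' : μ₁ ^ 2 ≤ νₙ ^ 2 * b := hb ▸
    sq_le_sq_mul_rayleighQuotient_mul_inv_sq_mul hWc hTc hWu hν₁pos.le hWσ hμ₁pos.le hTσ hy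
  have hc' : c * ν₁ ^ 2 ≤ μₙ ^ 3 := hc ▸
    rayleighQuotient_mul_inv_mul_mul_inv_mul_mul_sq_le hWc hTc hWu hν₁pos.le hWσ hμ₁pos.le hTσ hy
  have hbpos : 0 < b := pos_of_mul_pos_right ((pow_pos hμ₁pos 2).trans_le hb') (sq_nonneg _)
  have hapos : 0 < a := hμ₁pos.trans_le ha'
  have hdisc := discrim_nonpos_of_le_two_div_mul hapos hbpos hα.le (hαle hbpos.ne')
  rw [Complex.norm_def, Complex.normSq_eq_div_of_discrim_nonpos hapos hdisc
    (quadratic_eq_zero_of_fromBlocks_mulVec_eigen hWc hTc hWu hy heig ha hb hc)]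
  exact Real.sqrt_le_sqrt <|
    sub_mul_div_le_of_discrim_nonpos hμ₁pos hν₁pos hνₙpos hα.le ha' hb' hc' hdisc

/-- Theorem 2: With `W` symmetric positive definite (extreme
eigenvalues `ν₁, νₙ`) and `T` symmetric positive definite (extreme eigenvalues
`μ₁ > 0, μₙ`), for any eigenpair `(λ, (x; y))` of `𝒢_α⁻¹𝒜` with `α > 0`, `y ≠ 0`,
and `α ≤ (2/b)(√(a(a+c)) - a)` whenever `b ≠ 0`, the eigenvalue `λ` satisfies
`|λ - 1| ≤ √((μₙ³νₙ² - αμ₁²ν₁²)/(ν₁²νₙ²μ₁))`. -/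
theorem blt_eigen_uniform_disk {n : ℕ} (W T : Matrix (Fin n) (Fin n) ℝ)
    (hW : W.PosDef) (hT : T.PosDef) (ν₁ νₙ μ₁ μₙ : ℝ)
    (hν₁ : IsLeast (Set.range hW.1.eigenvalues) ν₁)
    (hνₙ : IsGreatest (Set.range hW.1.eigenvalues) νₙ)
    (hμ₁ : IsLeast (Set.range hT.1.eigenvalues) μ₁)
    (hμₙ : IsGreatest (Set.range hT.1.eigenvalues) μₙ)
    (hμ₁pos : 0 < μ₁)
    (α : ℝ) (hα : 0 < α) (lam : ℂ) (x y : Fin n → ℂ)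
    (hu : Sum.elim x y ≠ 0)
    (heig : Matrix.fromBlocks (W.map Complex.ofReal) (-(T.map Complex.ofReal))
        (T.map Complex.ofReal) (W.map Complex.ofReal) *ᵥ Sum.elim x y
      = lam • (Matrix.fromBlocks (W.map Complex.ofReal) 0 ((α : ℂ) • 1)
        (W.map Complex.ofReal) *ᵥ Sum.elim x y))
    (hy : y ≠ 0) (a b c : ℝ)
    (ha : a = ((star y ⬝ᵥ (T.map Complex.ofReal *ᵥ y)) / (star y ⬝ᵥ y)).re)
    (hb : b = ((star y ⬝ᵥ ((T.map Complex.ofReal * (W.map Complex.ofReal)⁻¹ ^ 2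
        * T.map Complex.ofReal) *ᵥ y)) / (star y ⬝ᵥ y)).re)
    (hc : c = ((star y ⬝ᵥ ((T.map Complex.ofReal * (W.map Complex.ofReal)⁻¹
        * T.map Complex.ofReal * (W.map Complex.ofReal)⁻¹
        * T.map Complex.ofReal) *ᵥ y)) / (star y ⬝ᵥ y)).re)
    (hαle : b ≠ 0 → α ≤ (2 / b) * (Real.sqrt (a * (a + c)) - a)) :
    ‖lam - 1‖
      ≤ Real.sqrt ((μₙ ^ 3 * νₙ ^ 2 - α * μ₁ ^ 2 * ν₁ ^ 2)
          / (ν₁ ^ 2 * νₙ ^ 2 * μ₁)) :=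
  blt_eigen_uniform_disk_general W T hW hT ν₁ νₙ μ₁ μₙ hν₁ hνₙ hμ₁ hμₙ α hα lam x y heig hy a b c ha
    hb hc hαle
end

section
/- Let ν₁, ν_n, μ₁, μ_n be real numbers with 0 < ν₁ ≤ ν_n and 0 < μ₁ ≤ μ_n, and let a, b, c be real numbers satisfying μ₁ ≤ a ≤ μ_n, (μ₁/ν_n)² ≤ b ≤ (μ_n/ν₁)², and μ₁³/ν_n² ≤ c ≤ μ_n³/ν₁². Then b > 0 and (2/b)(√(a(a + c)) − a) ≥ 2ν₁³μ₁⁴ / (ν_n²μ_n³(√(ν₁² + μ_n²) + ν₁)). -/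
/-! Rationalising gives `(2/b)(√(a(a+c)) - a) = 2ac / (b(√(a(a+c)) + a))`; the bound follows by
estimating the numerator from below and the denominator from above, factor by factor, with the
extreme eigenvalue bounds on `a`, `b`, `c`. -/

theorem sqrt_mul_add_sub_eq_div {a c : ℝ} (ha : 0 < a) (hc : 0 ≤ c) :
    √(a * (a + c)) - a = a * c / (√(a * (a + c)) + a) := by
  have hsq : √(a * (a + c)) ^ 2 = a * (a + c) := Real.sq_sqrt (by positivity)
  rw [eq_div_iff (by positivity)]
  linear_combination hsq

theorem sqrt_mul_add_add_le {a c μ ν : ℝ} (hν : 0 < ν) (ha₀ : 0 ≤ a) (ha : a ≤ μ)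
    (hc₀ : 0 ≤ c) (hc : c ≤ μ ^ 3 / ν ^ 2) :
    √(a * (a + c)) + a ≤ μ * (√(ν ^ 2 + μ ^ 2) + ν) / ν := by
  have hμ : 0 ≤ μ := ha₀.trans ha
  have hsqrt : √(a * (a + c)) ≤ μ * √(ν ^ 2 + μ ^ 2) / ν := by
    rw [Real.sqrt_le_left (by positivity), div_pow, mul_pow, Real.sq_sqrt (by positivity)]
    calc a * (a + c) ≤ μ * (μ + μ ^ 3 / ν ^ 2) := by gcongr
      _ = μ ^ 2 * (ν ^ 2 + μ ^ 2) / ν ^ 2 := by field_simp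
  have ha' : a ≤ μ * ν / ν := by rwa [mul_div_cancel_right₀ _ hν.ne']
  calc √(a * (a + c)) + a ≤ μ * √(ν ^ 2 + μ ^ 2) / ν + μ * ν / ν := add_le_add hsqrt ha'
    _ = μ * (√(ν ^ 2 + μ ^ 2) + ν) / ν := by ring

theorem blt_alpha_star_lower_bound_general (ν₁ νₙ μ₁ μₙ a b c : ℝ)
    (hν₁ : 0 < ν₁) (hν : ν₁ ≤ νₙ) (hμ₁ : 0 < μ₁)
    (ha₁ : μ₁ ≤ a) (ha₂ : a ≤ μₙ)
    (hb₁ : (μ₁ / νₙ) ^ 2 ≤ b) (hb₂ : b ≤ (μₙ / ν₁) ^ 2)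
    (hc₁ : μ₁ ^ 3 / νₙ ^ 2 ≤ c) (hc₂ : c ≤ μₙ ^ 3 / ν₁ ^ 2) :
    0 < b ∧
      2 * ν₁ ^ 3 * μ₁ ^ 4 / (νₙ ^ 2 * μₙ ^ 3 * (Real.sqrt (ν₁ ^ 2 + μₙ ^ 2) + ν₁))
        ≤ (2 / b) * (Real.sqrt (a * (a + c)) - a) := by
  have hνₙ : 0 < νₙ := hν₁.trans_le hν
  have hμₙ : 0 < μₙ := hμ₁.trans_le (ha₁.trans ha₂)
  have ha : 0 < a := hμ₁.trans_le ha₁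
  have hb : 0 < b := lt_of_lt_of_le (by positivity) hb₁
  have hc : 0 < c := lt_of_lt_of_le (by positivity) hc₁
  refine ⟨hb, ?_⟩
  calc 2 * ν₁ ^ 3 * μ₁ ^ 4 / (νₙ ^ 2 * μₙ ^ 3 * (√(ν₁ ^ 2 + μₙ ^ 2) + ν₁))
      = 2 * (μ₁ * (μ₁ ^ 3 / νₙ ^ 2)) /
          ((μₙ / ν₁) ^ 2 * (μₙ * (√(ν₁ ^ 2 + μₙ ^ 2) + ν₁) / ν₁)) := by
        field_simp
    _ ≤ 2 * (a * c) / (b * (√(a * (a + c)) + a)) := by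
        gcongr
        exact sqrt_mul_add_add_le hν₁ ha.le ha₂ hc.le hc₂
    _ = (2 / b) * (√(a * (a + c)) - a) := by
        rw [sqrt_mul_add_sub_eq_div ha hc.le]
        field_simp

/-- Remark 1: If `0 < ν₁ ≤ νₙ`, `0 < μ₁ ≤ μₙ`, and the Rayleigh
quotients satisfy `μ₁ ≤ a ≤ μₙ`, `(μ₁/νₙ)² ≤ b ≤ (μₙ/ν₁)²`, `μ₁³/νₙ² ≤ c ≤ μₙ³/ν₁²`,
then `b > 0` and `(2/b)(√(a(a+c)) - a) ≥ 2ν₁³μ₁⁴/(νₙ²μₙ³(√(ν₁² + μₙ²) + ν₁))`. -/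
theorem blt_alpha_star_lower_bound (ν₁ νₙ μ₁ μₙ a b c : ℝ)
    (hν₁ : 0 < ν₁) (hν : ν₁ ≤ νₙ) (hμ₁ : 0 < μ₁) (hμ : μ₁ ≤ μₙ)
    (ha₁ : μ₁ ≤ a) (ha₂ : a ≤ μₙ)
    (hb₁ : (μ₁ / νₙ) ^ 2 ≤ b) (hb₂ : b ≤ (μₙ / ν₁) ^ 2)
    (hc₁ : μ₁ ^ 3 / νₙ ^ 2 ≤ c) (hc₂ : c ≤ μₙ ^ 3 / ν₁ ^ 2) :
    0 < b ∧
      2 * ν₁ ^ 3 * μ₁ ^ 4 / (νₙ ^ 2 * μₙ ^ 3 * (Real.sqrt (ν₁ ^ 2 + μₙ ^ 2) + ν₁))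
        ≤ (2 / b) * (Real.sqrt (a * (a + c)) - a) :=
  blt_alpha_star_lower_bound_general ν₁ νₙ μ₁ μₙ a b c hν₁ hν hμ₁ ha₁ ha₂ hb₁ hb₂ hc₁ hc₂
end
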